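/- Let X be a topological space, I a finite index set with |I| elements, (U_μ)_{μ∈I} an open cover of X admitting a subordinate square-root partition of unity, A a unital C*-algebra, and set C₁ := |I|² + 1. Let v and v' be two (ε,U)-flat unitary Čech 1-cocycles subordinate to the cover with ‖v_{μν}(x) − v'_{μν}(x)‖ < ε for all μ, ν ∈ I and x ∈ U_μ ∩ U_ν, and assume 0 < ε < 1/(3·C₁). Then there exists a family of continuous maps V_{μν} : X × [0,1] → A such that V_{μν}(·,0) = v_{μν}, V_{μν}(·,1) = v'_{μν}, and for every t ∈ [0,1] the family (V_{μν}(·,t))_{μ,ν∈I} is a ((4·C₁+1)ε, U)-flat unitary Čech 1-cocycle subordinate to the cover. -/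

import Mathlib

/-- A unitary Čech 1-cocycle subordinate to the open cover `U`, with values in a unital
C*-algebra `A`. -/
def IsUnitaryCechCocycle {X I A : Type*} [TopologicalSpace X] [NormedRing A] [StarRing A]
    (U : I → Set X) (v : I → I → X → A) : Prop :=
  (∀ μ ν, Continuous (v μ ν)) ∧
  (∀ μ ν, ∀ x ∈ U μ ∩ U ν, v μ ν x ∈ unitary A) ∧
  (∀ μ ν, ∀ x ∈ U μ ∩ U ν, star (v μ ν x) = v ν μ x) ∧
  (∀ μ, ∀ x ∈ U μ, v μ μ x = 1) ∧
  (∀ μ ν σ, ∀ x ∈ U μ ∩ U ν ∩ U σ, v μ ν x * v ν σ x = v μ σ x)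

/-- `(ε, U)`-flatness of a Čech 1-cocycle: oscillation less than `ε` on every overlap. -/
def IsFlatCocycle {X I A : Type*} [TopologicalSpace X] [NormedRing A]
    (ε : ℝ) (U : I → Set X) (v : I → I → X → A) : Prop :=
  ∀ μ ν, ∀ x ∈ U μ ∩ U ν, ∀ y ∈ U μ ∩ U ν, ‖v μ ν x - v μ ν y‖ < ε

/-- A square-root partition of unity subordinate to the cover `U`. -/
def IsSqrtPartitionOfUnity {X I : Type*} [TopologicalSpace X] [Fintype I]
    (U : I → Set X) (η : I → X → ℝ) : Prop :=
  (∀ μ, Continuous (η μ)) ∧ (∀ μ x, 0 ≤ η μ x) ∧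
  (∀ μ x, η μ x ≠ 0 → x ∈ U μ) ∧ (∀ x, ∑ μ, (η μ x) ^ 2 = 1)

/-!
On overlaps the two cocycles are intertwined, `v_{μν} a_ν = a_μ v'_{μν}`, by the gauge
`a_μ = Σ_ρ η_ρ² v_{μρ} v'_{ρμ}`, which is `ε`-close to `1`. The unitary part `b (b* b)^{-1/2}` of
the polar decomposition respects this relation, so applying it along the segment from `1` to `a_μ`
gives unitaries `u_μ(t)` with `u_μ(0) = 1`, `‖u_μ(t) - 1‖ ≤ 4ε`, and
`u_μ(1)* v_{μν} u_ν(1) = v'_{μν}`. The gauge transforms `u_μ(t)* v_{μν} u_ν(t)` then join `v` to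
`v'` through cocycles of oscillation below `ε + 4 · 4ε = 17ε ≤ (4C₁ + 1)ε` as soon as `|I| ≥ 2`;
for `|I| ≤ 1` both cocycles are identically `1`.
-/

open Set

lemma abs_inv_sqrt_sub_one_le {x : ℝ} (hx : 1 / 2 ≤ x) : |(√x)⁻¹ - 1| ≤ |x - 1| := by
  have hs : 0 < √x := Real.sqrt_pos.2 (by linarith)
  have hsq : √x ^ 2 = x := Real.sq_sqrt (by linarith)
  have hs_half : 1 / 2 < √x := by nlinarith
  have hinv : (√x)⁻¹ - 1 = (1 - √x) / √x := by field_simp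
  have hx1 : x - 1 = (√x - 1) * (√x + 1) := by nlinarith
  rw [hinv, hx1, abs_div, abs_mul, abs_of_pos hs, abs_of_pos (by linarith : 0 < √x + 1),
    abs_sub_comm, div_le_iff₀ hs]
  nlinarith [abs_nonneg (√x - 1)]

lemma abs_sub_one_le_of_mem_spectrum {A : Type*} [NormedRing A] [NormedAlgebra ℝ A]
    [CompleteSpace A] [NormOneClass A] {a : A} {k : ℝ} (hk : k ∈ spectrum ℝ a) :
    |k - 1| ≤ ‖a - 1‖ := by
  have hk1 : k - 1 ∈ spectrum ℝ (a - algebraMap ℝ A 1) := by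
    rw [← spectrum.sub_singleton_eq]
    exact Set.sub_mem_sub hk rfl
  simpa using spectrum.norm_le_norm_of_mem hk1

lemma norm_star_mul_self_sub_one_le {A : Type*} [NormedRing A] [StarRing A] [NormedStarGroup A]
    (b : A) : ‖star b * b - 1‖ ≤ ‖b - 1‖ * (2 + ‖b - 1‖) := by
  have hb : star b * b - 1 = star (b - 1) * (b - 1) + star (b - 1) + (b - 1) := by
    simp only [star_sub, star_one]; noncomm_ring
  calc ‖star b * b - 1‖ ≤ ‖star (b - 1)‖ * ‖b - 1‖ + ‖star (b - 1)‖ + ‖b - 1‖ := by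
        rw [hb]; exact (norm_add₃_le ..).trans (by gcongr; exact norm_mul_le _ _)
    _ = ‖b - 1‖ * (2 + ‖b - 1‖) := by rw [norm_star]; ring

section InvSqrt

variable {A : Type*} [CStarAlgebra A]

noncomputable def invSqrt (a : A) : A := cfc (fun x : ℝ => (√x)⁻¹) a

lemma continuousOn_inv_sqrt {s : Set ℝ} (hs : s ⊆ Ioi 0) : ContinuousOn (fun x : ℝ => (√x)⁻¹) s :=
  Real.continuous_sqrt.continuousOn.inv₀ fun _ hx => (Real.sqrt_pos.2 (hs hx)).ne'

lemma IsSelfAdjoint.invSqrt (a : A) : IsSelfAdjoint (invSqrt a) := cfc_predicate _ _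

lemma invSqrt_mul_mul_invSqrt {a : A} (ha : IsSelfAdjoint a) (hpos : spectrum ℝ a ⊆ Ioi 0) :
    invSqrt a * a * invSqrt a = 1 := by
  have hf := continuousOn_inv_sqrt hpos
  calc invSqrt a * a * invSqrt a = cfc (fun x : ℝ => (√x)⁻¹ * x * (√x)⁻¹) a := by
        rw [cfc_mul _ _ a, cfc_mul _ _ a, cfc_id' ℝ a]; rfl
    _ = cfc (fun _ : ℝ => (1 : ℝ)) a := cfc_congr fun x hx => by
        have hx0 : 0 < x := hpos hx
        field_simp
        rw [Real.sq_sqrt hx0.le]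
    _ = 1 := cfc_const_one ℝ a

lemma isUnit_invSqrt {a : A} (ha : IsSelfAdjoint a) (hpos : spectrum ℝ a ⊆ Ioi 0) :
    IsUnit (invSqrt a) :=
  (isUnit_cfc_iff _ a (continuousOn_inv_sqrt hpos)).2 fun x hx =>
    inv_ne_zero (Real.sqrt_pos.2 (hpos hx)).ne'

lemma invSqrt_one : invSqrt (1 : A) = 1 := by simp [invSqrt]

lemma norm_invSqrt_sub_one_le {a : A} (ha : IsSelfAdjoint a) (h : ‖a - 1‖ ≤ 1 / 2) :
    ‖invSqrt a - 1‖ ≤ ‖a - 1‖ := by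
  nontriviality A
  have hspec : ∀ x ∈ spectrum ℝ a, 1 / 2 ≤ x := fun x hx => by
    have := abs_sub_one_le_of_mem_spectrum hx
    rw [abs_le] at this; linarith
  have hf := continuousOn_inv_sqrt fun x hx => (by linarith [hspec x hx] : (0 : ℝ) < x)
  have hsub : invSqrt a - 1 = cfc (fun x : ℝ => (√x)⁻¹ - 1) a := by
    rw [cfc_sub _ _ a, cfc_const_one ℝ a]; rfl
  rw [hsub]
  exact norm_cfc_le (norm_nonneg _) fun x hx =>
    (abs_inv_sqrt_sub_one_le (hspec x hx)).trans (abs_sub_one_le_of_mem_spectrum hx)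

lemma invSqrt_star_mul_mul {a w : A} (hw : w ∈ unitary A) (ha : IsSelfAdjoint a)
    (hpos : spectrum ℝ a ⊆ Ioi 0) : invSqrt (star w * a * w) = star w * invSqrt a * w := by
  have hφ := StarAlgHomClass.map_cfc (Unitary.conjStarAlgAut ℝ A (star ⟨w, hw⟩))
    (fun x : ℝ => (√x)⁻¹) a (continuousOn_inv_sqrt hpos) ?_ ha ?_
  · simpa [invSqrt] using hφ.symm
  · exact (continuous_const.mul continuous_id).mul continuous_const
  · simpa only [Unitary.conjStarAlgAut_star_apply] using ha.conjugate' w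

lemma Continuous.invSqrt {X : Type*} [TopologicalSpace X] {f : X → A} (hf : Continuous f)
    (hsa : ∀ x, IsSelfAdjoint (f x)) (h : ∀ x, ‖f x - 1‖ ≤ 1 / 2) :
    Continuous fun x => invSqrt (f x) := by
  rcases subsingleton_or_nontrivial A with hA | hA
  · exact continuous_of_const fun _ _ => Subsingleton.elim _ _
  refine hf.cfc' isCompact_Icc _ (s := Icc (1 / 2) (3 / 2)) (fun x k hk => ?_)
    (continuousOn_inv_sqrt fun k hk => (by norm_num : (0 : ℝ) < 1 / 2).trans_le hk.1) hsa
  have := (abs_sub_one_le_of_mem_spectrum hk).trans (h x)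
  rw [abs_le] at this
  constructor <;> linarith

end InvSqrt

section PolarUnitary

variable {A : Type*} [CStarAlgebra A]

noncomputable def polarUnitary (b : A) : A := b * invSqrt (star b * b)

lemma norm_star_mul_self_sub_one_le_half {b : A} (hb : ‖b - 1‖ ≤ 1 / 5) :
    ‖star b * b - 1‖ ≤ 1 / 2 :=
  (norm_star_mul_self_sub_one_le b).trans (by nlinarith [norm_nonneg (b - 1)])

lemma spectrum_star_mul_self_subset_Ioi {b : A} (hb : ‖b - 1‖ ≤ 1 / 5) :
    spectrum ℝ (star b * b) ⊆ Ioi 0 := by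
  nontriviality A
  intro k hk
  have := (abs_sub_one_le_of_mem_spectrum hk).trans (norm_star_mul_self_sub_one_le_half hb)
  rw [abs_le] at this
  exact show 0 < k by linarith

lemma polarUnitary_mem_unitary {b : A} (hb : ‖b - 1‖ ≤ 1 / 5) : polarUnitary b ∈ unitary A := by
  have hsa : IsSelfAdjoint (star b * b) := .star_mul_self b
  have hpos := spectrum_star_mul_self_subset_Ioi hb
  have hb_unit : IsUnit b := by
    simpa using isUnit_one_sub_of_norm_lt_one (x := 1 - b) (by rw [norm_sub_rev]; linarith)
  refine ((hb_unit.mul (isUnit_invSqrt hsa hpos)).mem_unitary_iff_star_mul_self).2 ?_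
  rw [star_mul, (IsSelfAdjoint.invSqrt _).star_eq, mul_assoc, ← mul_assoc (star b),
    ← mul_assoc]
  exact invSqrt_mul_mul_invSqrt hsa hpos

lemma norm_polarUnitary_sub_one_le {b : A} (hb : ‖b - 1‖ ≤ 1 / 5) :
    ‖polarUnitary b - 1‖ ≤ 4 * ‖b - 1‖ := by
  set s := invSqrt (star b * b)
  have hs : ‖s - 1‖ ≤ ‖b - 1‖ * (2 + ‖b - 1‖) :=
    (norm_invSqrt_sub_one_le (.star_mul_self b) (norm_star_mul_self_sub_one_le_half hb)).trans
      (norm_star_mul_self_sub_one_le b)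
  have hdec : polarUnitary b - 1 = (b - 1) * (s - 1) + (s - 1) + (b - 1) := by
    show b * s - 1 = _; noncomm_ring
  calc ‖polarUnitary b - 1‖ ≤ ‖b - 1‖ * ‖s - 1‖ + ‖s - 1‖ + ‖b - 1‖ := by
        rw [hdec]; exact (norm_add₃_le ..).trans (by gcongr; exact norm_mul_le _ _)
    _ ≤ ‖b - 1‖ * (‖b - 1‖ * (2 + ‖b - 1‖)) + ‖b - 1‖ * (2 + ‖b - 1‖) + ‖b - 1‖ := by gcongr
    _ ≤ 4 * ‖b - 1‖ := by
        have hδ := mul_nonneg (norm_nonneg (b - 1)) (sub_nonneg.2 hb)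
        nlinarith [mul_nonneg (norm_nonneg (b - 1)) hδ]

lemma polarUnitary_one : polarUnitary (1 : A) = 1 := by simp [polarUnitary, invSqrt_one]

lemma polarUnitary_mul_mul {b w w' : A} (hw : w ∈ unitary A) (hw' : w' ∈ unitary A)
    (hb : ‖b - 1‖ ≤ 1 / 5) : polarUnitary (w * b * w') = w * polarUnitary b * w' := by
  have hc : star (w * b * w') * (w * b * w') = star w' * (star b * b) * w' := by
    simp only [star_mul, mul_assoc]
    rw [← mul_assoc (star w) w, Unitary.star_mul_self_of_mem hw, one_mul]
  rw [polarUnitary, polarUnitary, hc, invSqrt_star_mul_mul hw' (.star_mul_self b)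
    (spectrum_star_mul_self_subset_Ioi hb)]
  simp only [mul_assoc]
  rw [← mul_assoc w' (star w'), Unitary.mul_star_self_of_mem hw', one_mul]

lemma star_polarUnitary_mul_mul_polarUnitary {a a' v v' : A} (hv : v ∈ unitary A)
    (hv' : v' ∈ unitary A) (ha : ‖a - 1‖ ≤ 1 / 5) (h : v * a' = a * v') :
    star (polarUnitary a) * v * polarUnitary a' = v' := by
  have ha' : a' = star v * a * v' := by
    rw [mul_assoc, ← h, ← mul_assoc, Unitary.star_mul_self_of_mem hv, one_mul]
  rw [ha', polarUnitary_mul_mul (Unitary.star_mem hv) hv' ha]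
  simp only [mul_assoc]
  rw [← mul_assoc v, Unitary.mul_star_self_of_mem hv, one_mul, ← mul_assoc,
    Unitary.star_mul_self_of_mem (polarUnitary_mem_unitary ha), one_mul]

lemma Continuous.polarUnitary {X : Type*} [TopologicalSpace X] {f : X → A} (hf : Continuous f)
    (h : ∀ x, ‖f x - 1‖ ≤ 1 / 5) : Continuous fun x => polarUnitary (f x) :=
  hf.mul ((hf.star.mul hf).invSqrt (fun _ => .star_mul_self _) fun x =>
    norm_star_mul_self_sub_one_le_half (h x))

end PolarUnitary

section ClipBall

variable {E : Type*} [NormedAddCommGroup E] [NormedSpace ℝ E]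

noncomputable def clipBall (r : ℝ) (z : E) : E := (r / max r ‖z‖) • z

lemma norm_clipBall_le {r : ℝ} (hr : 0 < r) (z : E) : ‖clipBall r z‖ ≤ r := by
  have hmax : 0 < max r ‖z‖ := lt_max_of_lt_left hr
  rw [clipBall, norm_smul, Real.norm_of_nonneg (div_nonneg hr.le hmax.le), div_mul_eq_mul_div,
    div_le_iff₀ hmax]
  exact mul_le_mul_of_nonneg_left (le_max_right _ _) hr.le

lemma clipBall_of_norm_le {r : ℝ} {z : E} (hz : ‖z‖ ≤ r) : clipBall r z = z := by
  rcases ((norm_nonneg z).trans hz).eq_or_lt with rfl | hr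
  · rw [norm_le_zero_iff.1 hz, clipBall, smul_zero]
  · rw [clipBall, max_eq_left hz, div_self hr.ne', one_smul]

lemma continuous_clipBall {r : ℝ} (hr : 0 < r) : Continuous (clipBall r : E → E) :=
  (continuous_const.div (continuous_const.max continuous_norm) fun _ =>
    (lt_max_of_lt_left hr).ne').smul continuous_id

end ClipBall

section Cocycle

variable {X I A : Type*} [TopologicalSpace X] [NormedRing A] {U : I → Set X}
  {v w : I → I → X → A}

lemma IsFlatCocycle.congr {ε : ℝ} (hv : IsFlatCocycle ε U v)
    (h : ∀ μ ν, ∀ x ∈ U μ ∩ U ν, w μ ν x = v μ ν x) : IsFlatCocycle ε U w :=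
  fun μ ν x hx y hy => by
    rw [h μ ν x hx, h μ ν y hy]
    exact hv μ ν x hx y hy

lemma IsFlatCocycle.mono {ε : ℝ} (hv : IsFlatCocycle ε U v) {ε' : ℝ} (h : ε ≤ ε') :
    IsFlatCocycle ε' U v :=
  fun μ ν x hx y hy => (hv μ ν x hx y hy).trans_le h

variable [StarRing A]

lemma IsUnitaryCechCocycle.mul_swap (hv : IsUnitaryCechCocycle U v) {μ ν : I} {x : X}
    (hx : x ∈ U μ ∩ U ν) : v μ ν x * v ν μ x = 1 := by
  rw [hv.2.2.2.2 μ ν μ x ⟨hx, hx.1⟩, hv.2.2.2.1 μ x hx.1]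

lemma IsUnitaryCechCocycle.apply_eq_one [Subsingleton I] (hv : IsUnitaryCechCocycle U v)
    (hcover : ∀ x, ∃ μ, x ∈ U μ) (μ ν : I) (x : X) : v μ ν x = 1 := by
  obtain ⟨ρ, hρ⟩ := hcover x
  rw [Subsingleton.elim μ ρ, Subsingleton.elim ν ρ]
  exact hv.2.2.2.1 ρ x hρ

lemma IsUnitaryCechCocycle.congr (hv : IsUnitaryCechCocycle U v)
    (hw : ∀ μ ν, Continuous (w μ ν)) (h : ∀ μ ν, ∀ x ∈ U μ ∩ U ν, w μ ν x = v μ ν x) :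
    IsUnitaryCechCocycle U w := by
  obtain ⟨-, hU, hstar, hdiag, hmul⟩ := hv
  refine ⟨hw, fun μ ν x hx => h μ ν x hx ▸ hU μ ν x hx, fun μ ν x hx => ?_, fun μ x hx => ?_,
    fun μ ν σ x hx => ?_⟩
  · rw [h μ ν x hx, h ν μ x ⟨hx.2, hx.1⟩]
    exact hstar μ ν x hx
  · rw [h μ μ x ⟨hx, hx⟩]
    exact hdiag μ x hx
  · obtain ⟨⟨hμ, hν⟩, hσ⟩ := hx
    rw [h μ ν x ⟨hμ, hν⟩, h ν σ x ⟨hν, hσ⟩, h μ σ x ⟨hμ, hσ⟩]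
    exact hmul μ ν σ x ⟨⟨hμ, hν⟩, hσ⟩

def gaugeTransform (u : I → X → A) (v : I → I → X → A) : I → I → X → A :=
  fun μ ν x => star (u μ x) * v μ ν x * u ν x

lemma IsUnitaryCechCocycle.gaugeTransform [ContinuousStar A] (hv : IsUnitaryCechCocycle U v)
    {u : I → X → A} (hu : ∀ μ, Continuous (u μ)) (huU : ∀ μ x, u μ x ∈ unitary A) :
    IsUnitaryCechCocycle U (gaugeTransform u v) := by
  obtain ⟨hc, hU, hstar, hdiag, hmul⟩ := hv
  refine ⟨fun μ ν => ((hu μ).star.mul (hc μ ν)).mul (hu ν), fun μ ν x hx => ?_,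
    fun μ ν x hx => ?_, fun μ x hx => ?_, fun μ ν σ x hx => ?_⟩
  · exact mul_mem (mul_mem (Unitary.star_mem (huU μ x)) (hU μ ν x hx)) (huU ν x)
  · simp only [_root_.gaugeTransform, star_mul, star_star, ← hstar μ ν x hx, mul_assoc]
  · simp only [_root_.gaugeTransform, hdiag μ x hx, mul_one,
      Unitary.star_mul_self_of_mem (huU μ x)]
  · simp only [_root_.gaugeTransform, ← hmul μ ν σ x hx, mul_assoc]
    rw [← mul_assoc (u ν x), Unitary.mul_star_self_of_mem (huU ν x), one_mul]

end Cocycle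

section FlatGauge

variable {X I A : Type*} [TopologicalSpace X] [CStarAlgebra A] {U : I → Set X}
  {v v' : I → I → X → A} {ε : ℝ}

lemma norm_star_mul_mul_sub_star_mul_mul_le {p q r p' q' r' : A} (hq : q ∈ unitary A)
    (hr : r ∈ unitary A) (hp' : p' ∈ unitary A) (hr' : r' ∈ unitary A) :
    ‖star p * r * q - star p' * r' * q'‖ ≤ ‖p - p'‖ + ‖r - r'‖ + ‖q - q'‖ := by
  have hdec : star p * r * q - star p' * r' * q' =
      star (p - p') * (r * q) + star p' * (r - r') * q + star p' * r' * (q - q') := by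
    rw [star_sub]; noncomm_ring
  rw [hdec]
  refine (norm_add₃_le ..).trans (le_of_eq ?_)
  rw [CStarRing.norm_mul_mem_unitary _ (mul_mem hr hq), norm_star,
    CStarRing.norm_mul_mem_unitary _ hq,
    CStarRing.norm_mem_unitary_mul _ (Unitary.star_mem hp'),
    CStarRing.norm_mem_unitary_mul _ (mul_mem (Unitary.star_mem hp') hr')]

lemma IsFlatCocycle.gaugeTransform (hvf : IsFlatCocycle ε U v) (hv : IsUnitaryCechCocycle U v)
    {u : I → X → A} (huU : ∀ μ x, u μ x ∈ unitary A) {δ : ℝ}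
    (hosc : ∀ μ x y, ‖u μ x - u μ y‖ ≤ δ) :
    IsFlatCocycle (ε + 2 * δ) U (gaugeTransform u v) := fun μ ν x hx y hy =>
  calc _ ≤ ‖u μ x - u μ y‖ + ‖v μ ν x - v μ ν y‖ + ‖u ν x - u ν y‖ :=
        norm_star_mul_mul_sub_star_mul_mul_le (huU ν x) (hv.2.1 μ ν x hx) (huU μ y)
          (hv.2.1 μ ν y hy)
    _ < ε + 2 * δ := by linarith [hosc μ x y, hvf μ ν x hx y hy, hosc ν x y]

lemma IsUnitaryCechCocycle.norm_mul_sub_one (hv : IsUnitaryCechCocycle U v) {μ ν : I} {x : X}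
    (hx : x ∈ U μ ∩ U ν) : ‖v μ ν x * v' ν μ x - 1‖ = ‖v ν μ x - v' ν μ x‖ := by
  rw [← hv.mul_swap hx, ← mul_sub, CStarRing.norm_mem_unitary_mul _ (hv.2.1 μ ν x hx),
    norm_sub_rev]

end FlatGauge

section AveragedGauge

variable {X I A : Type*} [Fintype I] [CStarAlgebra A] {U : I → Set X}
  {η : I → X → ℝ} {ε : ℝ} {v v' : I → I → X → A}

/-- The clipping is inactive on `U_μ` (`averagedGauge_eq_sum`); it keeps the gauge within `ε` of
`1` off `U_μ`, where `v_{μρ} v'_{ρμ}` is unconstrained. -/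
noncomputable def averagedGauge (η : I → X → ℝ) (ε : ℝ) (v v' : I → I → X → A) (μ : I)
    (x : X) : A :=
  1 + ∑ ρ, η ρ x ^ 2 • clipBall ε (v μ ρ x * v' ρ μ x - 1)

lemma norm_averagedGauge_sub_one_le (hη : ∀ x, ∑ ρ, η ρ x ^ 2 = 1) (hε : 0 < ε) (μ : I)
    (x : X) : ‖averagedGauge η ε v v' μ x - 1‖ ≤ ε := by
  rw [averagedGauge, add_sub_cancel_left]
  calc _ ≤ ∑ ρ, ‖η ρ x ^ 2 • clipBall ε (v μ ρ x * v' ρ μ x - 1)‖ := norm_sum_le _ _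
    _ ≤ ∑ ρ, η ρ x ^ 2 * ε := Finset.sum_le_sum fun ρ _ => by
        rw [norm_smul, Real.norm_of_nonneg (sq_nonneg _)]
        exact mul_le_mul_of_nonneg_left (norm_clipBall_le hε _) (sq_nonneg _)
    _ = ε := by rw [← Finset.sum_mul, hη x, one_mul]

variable [TopologicalSpace X]

lemma continuous_averagedGauge (hη : ∀ ρ, Continuous (η ρ)) (hε : 0 < ε)
    (hv : ∀ μ ν, Continuous (v μ ν)) (hv' : ∀ μ ν, Continuous (v' μ ν)) (μ : I) :
    Continuous (averagedGauge η ε v v' μ) :=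
  continuous_const.add <| continuous_finsetSum _ fun ρ _ => ((hη ρ).pow 2).smul <|
    (continuous_clipBall hε).comp (((hv μ ρ).mul (hv' ρ μ)).sub continuous_const)

lemma averagedGauge_eq_sum (hη : IsSqrtPartitionOfUnity U η) (hv : IsUnitaryCechCocycle U v)
    (hclose : ∀ μ ν, ∀ x ∈ U μ ∩ U ν, ‖v μ ν x - v' μ ν x‖ ≤ ε) {μ : I} {x : X}
    (hx : x ∈ U μ) : averagedGauge η ε v v' μ x = ∑ ρ, η ρ x ^ 2 • (v μ ρ x * v' ρ μ x) := by
  have hclip : ∀ ρ, η ρ x ^ 2 • clipBall ε (v μ ρ x * v' ρ μ x - 1) =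
      η ρ x ^ 2 • (v μ ρ x * v' ρ μ x - 1) := fun ρ => by
    rcases eq_or_ne (η ρ x) 0 with h | h
    · simp [h]
    · have hxρ : x ∈ U μ ∩ U ρ := ⟨hx, hη.2.2.1 ρ x h⟩
      rw [clipBall_of_norm_le ((hv.norm_mul_sub_one hxρ).trans_le
        (hclose ρ μ x ⟨hxρ.2, hxρ.1⟩))]
  simp only [averagedGauge, hclip, smul_sub, Finset.sum_sub_distrib, ← Finset.sum_smul,
    hη.2.2.2 x, one_smul, add_sub_cancel]

lemma mul_averagedGauge (hη : IsSqrtPartitionOfUnity U η) (hv : IsUnitaryCechCocycle U v)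
    (hv' : IsUnitaryCechCocycle U v')
    (hclose : ∀ μ ν, ∀ x ∈ U μ ∩ U ν, ‖v μ ν x - v' μ ν x‖ ≤ ε) {μ ν : I} {x : X}
    (hx : x ∈ U μ ∩ U ν) :
    v μ ν x * averagedGauge η ε v v' ν x = averagedGauge η ε v v' μ x * v' μ ν x := by
  rw [averagedGauge_eq_sum hη hv hclose hx.2, averagedGauge_eq_sum hη hv hclose hx.1,
    Finset.mul_sum, Finset.sum_mul]
  refine Finset.sum_congr rfl fun ρ _ => ?_
  rcases eq_or_ne (η ρ x) 0 with h | h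
  · simp [h]
  · have hρ := hη.2.2.1 ρ x h
    rw [mul_smul_comm, smul_mul_assoc, ← mul_assoc, hv.2.2.2.2 μ ν ρ x ⟨hx, hρ⟩, mul_assoc,
      hv'.2.2.2.2 ρ μ ν x ⟨⟨hρ, hx.1⟩, hx.2⟩]

end AveragedGauge

section Homotopy

variable {X I A : Type*} [TopologicalSpace X] [CStarAlgebra A] {U : I → Set X}
  {v v' : I → I → X → A}

lemma exists_unitary_path_of_intertwining (hv : IsUnitaryCechCocycle U v)
    (hv' : IsUnitaryCechCocycle U v') {a : I → X → A} (ha : ∀ μ, Continuous (a μ)) {δ : ℝ}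
    (hδ : δ ≤ 1 / 5) (ha1 : ∀ μ x, ‖a μ x - 1‖ ≤ δ)
    (hgauge : ∀ μ ν, ∀ x ∈ U μ ∩ U ν, v μ ν x * a ν x = a μ x * v' μ ν x) :
    ∃ u : I → ℝ → X → A, (∀ μ, Continuous fun q : X × ℝ => u μ q.2 q.1) ∧
      (∀ μ x, u μ 0 x = 1) ∧ (∀ μ t x, u μ t x ∈ unitary A) ∧
      (∀ μ t x, ‖u μ t x - 1‖ ≤ 4 * δ) ∧
      ∀ μ ν, ∀ x ∈ U μ ∩ U ν, gaugeTransform (fun μ => u μ 1) v μ ν x = v' μ ν x := by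
  set τ : ℝ → ℝ := fun t => projIcc (0 : ℝ) 1 zero_le_one t
  have hb : ∀ μ t x, ‖1 + τ t • (a μ x - 1) - 1‖ ≤ δ := fun μ t x => by
    rw [add_sub_cancel_left, norm_smul, Real.norm_of_nonneg (projIcc (0 : ℝ) 1 _ t).2.1]
    exact (mul_le_of_le_one_left (norm_nonneg _) (projIcc (0 : ℝ) 1 _ t).2.2).trans (ha1 μ x)
  refine ⟨fun μ t x => polarUnitary (1 + τ t • (a μ x - 1)), fun μ => ?_, fun μ x => ?_,
    fun μ t x => polarUnitary_mem_unitary ((hb μ t x).trans hδ), fun μ t x => ?_,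
    fun μ ν x hx => ?_⟩
  · refine Continuous.polarUnitary ?_ fun q => (hb μ q.2 q.1).trans hδ
    exact continuous_const.add ((continuous_subtype_val.comp (continuous_projIcc.comp
      continuous_snd)).smul (((ha μ).comp continuous_fst).sub continuous_const))
  · simp [τ, polarUnitary_one]
  · exact (norm_polarUnitary_sub_one_le ((hb μ t x).trans hδ)).trans (by linarith [hb μ t x])
  · simp only [gaugeTransform, τ, projIcc_right, one_smul, add_sub_cancel]
    exact star_polarUnitary_mul_mul_polarUnitary (hv.2.1 μ ν x hx) (hv'.2.1 μ ν x hx)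
      ((ha1 μ x).trans hδ) (hgauge μ ν x hx)

lemma exists_homotopy_of_unitary_path {ε : ℝ} (hv : IsUnitaryCechCocycle U v)
    (hvf : IsFlatCocycle ε U v) (hv'c : ∀ μ ν, Continuous (v' μ ν)) {u : I → ℝ → X → A}
    (huc : ∀ μ, Continuous fun q : X × ℝ => u μ q.2 q.1) (hu0 : ∀ μ x, u μ 0 x = 1)
    (huU : ∀ μ t x, u μ t x ∈ unitary A) {δ : ℝ} (hu1 : ∀ μ t x, ‖u μ t x - 1‖ ≤ δ)
    (hv' : ∀ μ ν, ∀ x ∈ U μ ∩ U ν, gaugeTransform (fun μ => u μ 1) v μ ν x = v' μ ν x) :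
    ∃ V : I → I → ℝ → X → A,
      (∀ μ ν, ContinuousOn (fun q : X × ℝ => V μ ν q.2 q.1) (Set.univ ×ˢ Set.Icc 0 1)) ∧
      (∀ μ ν x, V μ ν 0 x = v μ ν x ∧ V μ ν 1 x = v' μ ν x) ∧
      (∀ t ∈ Set.Icc (0 : ℝ) 1,
        IsUnitaryCechCocycle U (fun μ ν x => V μ ν t x) ∧
        IsFlatCocycle (ε + 4 * δ) U (fun μ ν x => V μ ν t x)) := by
  have hut : ∀ t μ, Continuous (u μ t) := fun t μ =>
    (huc μ).comp (continuous_id.prodMk continuous_const)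
  have hg1 : ∀ μ ν, Continuous (gaugeTransform (fun μ => u μ 1) v μ ν) := fun μ ν =>
    ((hut 1 μ).star.mul (hv.1 μ ν)).mul (hut 1 ν)
  -- the correction term vanishes on overlaps; it only fixes the end point `v'` off them
  refine ⟨fun μ ν t x => gaugeTransform (fun μ => u μ t) v μ ν x +
    t • (v' μ ν x - gaugeTransform (fun μ => u μ 1) v μ ν x), fun μ ν => ?_, fun μ ν x => ?_,
    fun t _ => ?_⟩
  · exact ((((huc μ).star.mul ((hv.1 μ ν).comp continuous_fst)).mul (huc ν)).add
      (continuous_snd.smul (((hv'c μ ν).sub (hg1 μ ν)).comp continuous_fst))).continuousOn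
  · simp [gaugeTransform, hu0]
  have heq : ∀ μ ν, ∀ x ∈ U μ ∩ U ν, gaugeTransform (fun μ => u μ t) v μ ν x +
      t • (v' μ ν x - gaugeTransform (fun μ => u μ 1) v μ ν x) =
      gaugeTransform (fun μ => u μ t) v μ ν x := fun μ ν x hx => by
    rw [hv' μ ν x hx, sub_self, smul_zero, add_zero]
  have hosc : ∀ μ x y, ‖u μ t x - u μ t y‖ ≤ 2 * δ := fun μ x y => by
    rw [← sub_sub_sub_cancel_right _ _ 1]
    linarith [norm_sub_le (u μ t x - 1) (u μ t y - 1), hu1 μ t x, hu1 μ t y]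
  refine ⟨(hv.gaugeTransform (hut t) (huU · t)).congr (fun μ ν => ?_) heq,
    ((hvf.gaugeTransform hv (huU · t) hosc).congr heq).mono (by linarith)⟩
  exact (((hut t μ).star.mul (hv.1 μ ν)).mul (hut t ν)).add
    (continuous_const.smul ((hv'c μ ν).sub (hg1 μ ν)))

end Homotopy

theorem close_flat_cocycles_homotopic_general
    {X I A : Type*} [TopologicalSpace X] [Fintype I] [CStarAlgebra A]
    (U : I → Set X) (hcover : ∀ x, ∃ μ, x ∈ U μ)
    (hpou : ∃ η : I → X → ℝ, IsSqrtPartitionOfUnity U η)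
    (C₁ : ℝ) (hC₁ : C₁ = (Fintype.card I : ℝ) ^ 2 + 1)
    (ε : ℝ) (hε0 : 0 < ε) (hε : ε < 1 / (3 * C₁))
    (v v' : I → I → X → A)
    (hv : IsUnitaryCechCocycle U v) (hvf : IsFlatCocycle ε U v)
    (hv' : IsUnitaryCechCocycle U v')
    (hclose : ∀ μ ν, ∀ x ∈ U μ ∩ U ν, ‖v μ ν x - v' μ ν x‖ < ε) :
    ∃ V : I → I → ℝ → X → A,
      (∀ μ ν, ContinuousOn (fun q : X × ℝ => V μ ν q.2 q.1) (Set.univ ×ˢ Set.Icc 0 1)) ∧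
      (∀ μ ν x, V μ ν 0 x = v μ ν x ∧ V μ ν 1 x = v' μ ν x) ∧
      (∀ t ∈ Set.Icc (0 : ℝ) 1,
        IsUnitaryCechCocycle U (fun μ ν x => V μ ν t x) ∧
        IsFlatCocycle ((4 * C₁ + 1) * ε) U (fun μ ν x => V μ ν t x)) := by
  obtain ⟨η, hη⟩ := hpou
  rcases le_or_gt (Fintype.card I) 1 with hI | hI
  · have : Subsingleton I := Fintype.card_le_one_iff_subsingleton.mp hI
    have hvv' : v = v' := by
      ext μ ν x; rw [hv.apply_eq_one hcover, hv'.apply_eq_one hcover]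
    refine ⟨fun μ ν _ => v μ ν, fun μ ν => ((hv.1 μ ν).comp continuous_fst).continuousOn,
      fun μ ν x => ⟨rfl, by rw [hvv']⟩, fun _ _ => ⟨hv, hvf.mono ?_⟩⟩
    nlinarith [sq_nonneg (Fintype.card I : ℝ)]
  have hC₁5 : 5 ≤ C₁ := by
    have : (2 : ℝ) ≤ Fintype.card I := by exact_mod_cast hI
    nlinarith
  have hε5 : ε ≤ 1 / 5 := by
    have := one_div_le_one_div_of_le (by norm_num) (by linarith : (15 : ℝ) ≤ 3 * C₁)
    linarith
  have hclose' := fun μ ν x hx => (hclose μ ν x hx).le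
  obtain ⟨u, huc, hu0, huU, hu1, hu_end⟩ := exists_unitary_path_of_intertwining hv hv'
    (continuous_averagedGauge hη.1 hε0 hv.1 hv'.1) hε5 (norm_averagedGauge_sub_one_le hη.2.2.2 hε0)
    fun μ ν x hx => mul_averagedGauge hη hv hv' hclose' hx
  obtain ⟨V, hVc, hVend, hV⟩ := exists_homotopy_of_unitary_path hv hvf hv'.1 huc hu0 huU hu1 hu_end
  exact ⟨V, hVc, hVend, fun t ht => ⟨(hV t ht).1, (hV t ht).2.mono (by nlinarith)⟩⟩

/-- core of Lemma `lem:homotopy`: two `(ε, U)`-flat unitary Čech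
cocycles at uniform distance less than `ε` (with `0 < ε < 1/(3C₁)`, `C₁ = |I|² + 1`) are
homotopic through `((4C₁ + 1)ε, U)`-flat cocycles. -/
theorem close_flat_cocycles_homotopic
    {X I A : Type*} [TopologicalSpace X] [Fintype I] [CStarAlgebra A]
    (U : I → Set X) (hopen : ∀ μ, IsOpen (U μ)) (hcover : ∀ x, ∃ μ, x ∈ U μ)
    (hpou : ∃ η : I → X → ℝ, IsSqrtPartitionOfUnity U η)
    (C₁ : ℝ) (hC₁ : C₁ = (Fintype.card I : ℝ) ^ 2 + 1)
    (ε : ℝ) (hε0 : 0 < ε) (hε : ε < 1 / (3 * C₁))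
    (v v' : I → I → X → A)
    (hv : IsUnitaryCechCocycle U v) (hvf : IsFlatCocycle ε U v)
    (hv' : IsUnitaryCechCocycle U v') (hv'f : IsFlatCocycle ε U v')
    (hclose : ∀ μ ν, ∀ x ∈ U μ ∩ U ν, ‖v μ ν x - v' μ ν x‖ < ε) :
    ∃ V : I → I → ℝ → X → A,
      (∀ μ ν, ContinuousOn (fun q : X × ℝ => V μ ν q.2 q.1) (Set.univ ×ˢ Set.Icc 0 1)) ∧
      (∀ μ ν x, V μ ν 0 x = v μ ν x ∧ V μ ν 1 x = v' μ ν x) ∧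
      (∀ t ∈ Set.Icc (0 : ℝ) 1,
        IsUnitaryCechCocycle U (fun μ ν x => V μ ν t x) ∧
        IsFlatCocycle ((4 * C₁ + 1) * ε) U (fun μ ν x => V μ ν t x)) :=
  close_flat_cocycles_homotopic_general U hcover hpou C₁ hC₁ ε hε0 hε v v' hv hvf hv' hclose
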